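/- arXiv:1701.02109 — 2 statements merged into one kernel-verified Lean document; each statement's English description precedes it below -/
import Mathlib

section
/- The atoms of the lattice (PE_n, ≤_dref) are exactly the partitions a_{i,j} with unique non-singleton block {i,j} for 1 ≤ i < j ≤ n, excluding a_{1,n-1} and a_{n-1,n}. -/
/-- A set partition of `[n]` (as a setoid on `Fin n`) is noncrossing. -/
def IsNoncrossing {n : ℕ} (x : Setoid (Fin n)) : Prop :=
  ∀ i j k l : Fin n, i < j → j < k → k < l → x.r i k → x.r j l → x.r i j

/-- `B` is a block of the set partition `x`. -/
def IsBlock {n : ℕ} (x : Setoid (Fin n)) (B : Set (Fin n)) : Prop :=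
  ∃ a, B = {b | x.r a b}

/-- The set partition whose unique (possibly) non-singleton block is `S`. -/
def blockSetoid {n : ℕ} (S : Set (Fin n)) : Setoid (Fin n) where
  r a b := a = b ∨ (a ∈ S ∧ b ∈ S)
  iseqv := by
    refine ⟨fun _ => Or.inl rfl, ?_, ?_⟩
    · rintro a b (rfl | ⟨h1, h2⟩)
      · exact Or.inl rfl
      · exact Or.inr ⟨h2, h1⟩
    · rintro a b c (rfl | ⟨h1, h2⟩) h
      · exact h
      · rcases h with rfl | ⟨h3, h4⟩
        · exact Or.inr ⟨h1, h2⟩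
        · exact Or.inr ⟨h1, h4⟩

/-- The element `x_i` of the left-modular chain: its unique non-singleton block is
`[i-1] ∪ {n}` (in 1-based terms), i.e. the elements with value `< i-1` or value `n-1`. -/
def xChain (n i : ℕ) : Setoid (Fin n) :=
  blockSetoid {a : Fin n | a.val + 1 < i ∨ a.val = n - 1}

/-- The noncrossing closure: the smallest noncrossing partition above `x`. -/
def ncClosure {n : ℕ} (x : Setoid (Fin n)) : Setoid (Fin n) :=
  sInf {y | IsNoncrossing y ∧ x ≤ y}

/-- The join of two noncrossing partitions in `NC_n`. -/
def joinNC {n : ℕ} (x y : Setoid (Fin n)) : Setoid (Fin n) :=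
  ncClosure (x ⊔ y)

/-- The join of a set of noncrossing partitions in `NC_n`. -/
def joinSetNC {n : ℕ} (X : Set (Setoid (Fin n))) : Setoid (Fin n) :=
  ncClosure (sSup X)

/-- Membership in `PE_n`: noncrossing, `{n-1, n}` is not a block, and it is not the case
that `{n}` is a singleton block while `1 ∼ n-1`. -/
def PEmem {n : ℕ} (x : Setoid (Fin n)) : Prop :=
  IsNoncrossing x ∧
  ¬ IsBlock x {a : Fin n | a.val = n - 2 ∨ a.val = n - 1} ∧
  ¬ (IsBlock x {a : Fin n | a.val = n - 1} ∧
      ∃ a b : Fin n, a.val = 0 ∧ b.val = n - 2 ∧ x.r a b)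

/-- `m` is the meet of `x` and `y` in the poset `PE_n`. -/
def IsMeetPE {n : ℕ} (x y m : Setoid (Fin n)) : Prop :=
  PEmem m ∧ m ≤ x ∧ m ≤ y ∧ ∀ z, PEmem z → z ≤ x → z ≤ y → z ≤ m

/-- `j` is the join of `x` and `y` in the poset `PE_n`. -/
def IsJoinPE {n : ℕ} (x y j : Setoid (Fin n)) : Prop :=
  PEmem j ∧ x ≤ j ∧ y ≤ j ∧ ∀ z, PEmem z → x ≤ z → y ≤ z → j ≤ z

/-- `x ⋖ y` in `PE_n`. -/
def CovPE {n : ℕ} (x y : Setoid (Fin n)) : Prop :=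
  PEmem x ∧ PEmem y ∧ x < y ∧ ∀ z, PEmem z → x < z → ¬ z < y

/-- The atoms of `NC_n`: partitions `a_{i,j}` with unique non-singleton block `{i, j}`. -/
def IsAtomNC {n : ℕ} (a : Setoid (Fin n)) : Prop :=
  ∃ i j : Fin n, i < j ∧ a = blockSetoid {i, j}

/-- The partial order `≼` on atoms of `NC_n` induced by the classes
`A_j = {a : a ≤ x_j and a ≰ x_{j-1}}`. -/
def atomPrec {n : ℕ} (a b : Setoid (Fin n)) : Prop :=
  ∃ i j : ℕ, 1 ≤ i ∧ i < j ∧ j ≤ n - 1 ∧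
    (a ≤ xChain n i ∧ ¬ a ≤ xChain n (i - 1)) ∧
    (b ≤ xChain n j ∧ ¬ b ≤ xChain n (j - 1))

/-- A set of atoms of `NC_n` is bounded below (BB). -/
def IsBBset {n : ℕ} (X : Set (Setoid (Fin n))) : Prop :=
  ∀ d ∈ X, ∃ a, IsAtomNC a ∧ atomPrec a d ∧ a < joinSetNC X

/-- A set of atoms of `NC_n` is NBB: no nonempty subset is bounded below. -/
def IsNBBset {n : ℕ} (X : Set (Setoid (Fin n))) : Prop :=
  ∀ Y ⊆ X, Y.Nonempty → ¬ IsBBset Y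

/-- `X` is an NBB base for the top element of `NC_n`. -/
def IsNBBBaseTop {n : ℕ} (X : Set (Setoid (Fin n))) : Prop :=
  (∀ a ∈ X, IsAtomNC a) ∧ IsNBBset X ∧ joinSetNC X = ⊤

/-- The graph `τ(X)` on vertex set `[n]` associated with a set `X` of atoms:
`i` and `j` are adjacent iff `a_{i,j} ∈ X`. -/
def atomGraph {n : ℕ} (X : Set (Setoid (Fin n))) : SimpleGraph (Fin n) where
  Adj i j := i ≠ j ∧ blockSetoid ({i, j} : Set (Fin n)) ∈ X
  symm := by
    constructor
    rintro i j ⟨hne, hm⟩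
    exact ⟨hne.symm, by rwa [Set.pair_comm]⟩
  loopless := ⟨fun i h => h.1 rfl⟩

/-- The parking label of the cover `x ⋖ y` is `p`: `y` merges blocks `B₁, B₂` of `x` with
`min B₁ < min B₂`, and `p = max { j ∈ B₁ : j ≤ i for all i ∈ B₂ }`. -/
def ParkingLabelIs {n : ℕ} (x y : Setoid (Fin n)) (p : Fin n) : Prop :=
  ∃ B₁ B₂ : Set (Fin n), IsBlock x B₁ ∧ IsBlock x B₂ ∧ B₁ ≠ B₂ ∧
    IsBlock y (B₁ ∪ B₂) ∧
    (∃ a ∈ B₁, ∀ b ∈ B₂, a < b) ∧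
    p ∈ B₁ ∧ (∀ i ∈ B₂, p ≤ i) ∧ (∀ j ∈ B₁, (∀ i ∈ B₂, j ≤ i) → j ≤ p)

/-- The label of the cover `w ⋖ z` in the `S_n` EL-labeling of `PE_n` coming from the
left-modular chain: `λ(w,z) = min { i-1 : x_i ≰ w and x_i ≤ z }`. -/
def LabelIs (n : ℕ) (w z : Setoid (Fin n)) (v : ℕ) : Prop :=
  ∃ i : ℕ, 1 ≤ i ∧ i ≤ n ∧ i - 1 = v ∧ (¬ xChain n i ≤ w ∧ xChain n i ≤ z) ∧
    ∀ j : ℕ, 1 ≤ j → j ≤ n → (¬ xChain n j ≤ w ∧ xChain n j ≤ z) → i ≤ j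

/-- The sequence of edge labels along a (saturated) chain, recorded as a list. -/
def chainLabels {α Λ : Type*} (lab : α → α → Λ) (c : List α) : List Λ :=
  List.zipWith lab c c.tail

/-- `c` is a saturated chain from `a` to `b` with respect to the cover relation `cov`. -/
def IsSatChainList {α : Type*} (cov : α → α → Prop) (a b : α) (c : List α) : Prop :=
  c.head? = some a ∧ c.getLast? = some b ∧ c.Chain' cov

/-- A chain is rising if its label sequence is strictly increasing. -/
def RisingChain {α Λ : Type*} [LT Λ] (lab : α → α → Λ) (c : List α) : Prop :=
  (chainLabels lab c).Chain' (· < ·)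

/-- `lab` is an EL-labeling with respect to the cover relation `cov` and order `le`:
every interval has a unique rising maximal chain, which is lexicographically least. -/
def IsELLabeling {α Λ : Type*} [PartialOrder Λ] (cov : α → α → Prop) (le : α → α → Prop)
    (lab : α → α → Λ) : Prop :=
  ∀ a b, le a b → ∃ c : List α, IsSatChainList cov a b c ∧ RisingChain lab c ∧
    (∀ c', IsSatChainList cov a b c' → RisingChain lab c' → c' = c) ∧
    (∀ c', IsSatChainList cov a b c' → c' ≠ c →
      List.Lex (· < ·) (chainLabels lab c) (chainLabels lab c'))

/-! Every nontrivial relation `i ∼ j` of a partition `x` gives an atom `a_{i,j} ≤ x` of the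
partition lattice, and every `a_{i,j}` is noncrossing. The only pairs whose atom violates the
defining conditions of `PE_n` are `{1, n-1}` and `{n-1, n}`. So it suffices to see that a
nonbottom `x ∈ PE_n` relates some other pair: otherwise either `n-1 ∼ n`, and then `{n-1, n}`
is a block of `x`, or only `1 ∼ n-1`, and then `{n}` is a singleton block. -/

variable {n : ℕ}

theorem Setoid.exists_lt_rel_of_bot_lt {α : Type*} [LinearOrder α] {x : Setoid α}
    (h : ⊥ < x) : ∃ a b, a < b ∧ x.r a b := by
  by_contra! hx
  refine h.ne' (le_antisymm (fun a b hab => ?_) bot_le)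
  rcases lt_trichotomy a b with hlt | heq | hgt
  · exact absurd hab (hx a b hlt)
  · exact heq
  · exact absurd (x.symm hab) (hx b a hgt)

theorem blockSetoid_pair_rel_iff {i j a b : Fin n} :
    (blockSetoid ({i, j} : Set (Fin n))).r a b ↔ a = b ∨ (a = i ∧ b = j) ∨ (a = j ∧ b = i) := by
  change a = b ∨ (a ∈ ({i, j} : Set (Fin n)) ∧ b ∈ ({i, j} : Set (Fin n))) ↔ _
  simp only [Set.mem_insert_iff, Set.mem_singleton_iff]
  grind

theorem blockSetoid_pair_le_iff {i j : Fin n} {x : Setoid (Fin n)} :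
    blockSetoid ({i, j} : Set (Fin n)) ≤ x ↔ x.r i j := by
  refine ⟨fun h => h (blockSetoid_pair_rel_iff.mpr (Or.inr (Or.inl ⟨rfl, rfl⟩))), fun h a b hab => ?_⟩
  rcases blockSetoid_pair_rel_iff.mp hab with rfl | ⟨rfl, rfl⟩ | ⟨rfl, rfl⟩
  exacts [x.refl _, h, x.symm h]

theorem isAtom_blockSetoid_pair {i j : Fin n} (hij : i < j) :
    IsAtom (blockSetoid ({i, j} : Set (Fin n))) := by
  refine ⟨fun h => hij.ne ?_, fun z hz => ?_⟩
  · have hrel : (blockSetoid ({i, j} : Set (Fin n))).r i j := blockSetoid_pair_le_iff.mp le_rfl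
    rwa [h] at hrel
  · by_contra hbot
    obtain ⟨a, b, hab, hrel⟩ := Setoid.exists_lt_rel_of_bot_lt (bot_lt_iff_ne_bot.mpr hbot)
    have hzij : z.r i j := by
      rcases blockSetoid_pair_rel_iff.mp (hz.le hrel) with rfl | ⟨rfl, rfl⟩ | ⟨rfl, rfl⟩
      exacts [absurd hab (lt_irrefl a), hrel, absurd (hab.trans hij) (lt_irrefl a)]
    exact hz.not_ge (blockSetoid_pair_le_iff.mpr hzij)

theorem isNoncrossing_blockSetoid_pair (i j : Fin n) :
    IsNoncrossing (blockSetoid ({i, j} : Set (Fin n))) := by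
  intro a b c d hab hbc hcd hac hbd
  simp only [blockSetoid_pair_rel_iff] at hac hbd
  omega

theorem peMem_blockSetoid_pair {i j : Fin n} (hij : i < j)
    (h₁ : ¬(i.val = 0 ∧ j.val = n - 2)) (h₂ : ¬(i.val = n - 2 ∧ j.val = n - 1)) :
    PEmem (blockSetoid ({i, j} : Set (Fin n))) := by
  have hn : 2 ≤ n := by omega
  refine ⟨isNoncrossing_blockSetoid_pair i j, ?_, ?_⟩
  · rintro ⟨w, hw⟩
    have hmem : ∀ c : Fin n, c.val = n - 2 ∨ c.val = n - 1 →
        (blockSetoid ({i, j} : Set (Fin n))).r w c := fun c hc =>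
      (Set.ext_iff.mp hw c).mp hc
    have hrel : (blockSetoid ({i, j} : Set (Fin n))).r ⟨n - 2, by omega⟩ ⟨n - 1, by omega⟩ :=
      Setoid.trans' _ (Setoid.symm' _ (hmem _ (Or.inl rfl))) (hmem _ (Or.inr rfl))
    rw [blockSetoid_pair_rel_iff] at hrel
    simp only [Fin.ext_iff] at hrel
    omega
  · rintro ⟨-, a, b, ha, hb, hab⟩
    rw [blockSetoid_pair_rel_iff] at hab
    simp only [Fin.ext_iff] at hab
    omega

/-- In the 1-based notation of `PE_n`, the excluded pairs are `{1, n-1}` and `{n-1, n}`. -/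
def RelatesOnlyExcludedPairs (x : Setoid (Fin n)) : Prop :=
  ∀ c d : Fin n, c < d → x.r c d →
    (c.val = 0 ∧ d.val = n - 2) ∨ (c.val = n - 2 ∧ d.val = n - 1)

namespace RelatesOnlyExcludedPairs

variable {x : Setoid (Fin n)}

theorem val_cases (hx : RelatesOnlyExcludedPairs x) {c d : Fin n} (hcd : x.r c d) :
    c.val = d.val ∨ (c.val = 0 ∧ d.val = n - 2) ∨ (c.val = n - 2 ∧ d.val = 0) ∨
      (c.val = n - 2 ∧ d.val = n - 1) ∨ (c.val = n - 1 ∧ d.val = n - 2) := by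
  rcases lt_trichotomy c d with hlt | rfl | hgt
  · have := hx c d hlt hcd
    omega
  · exact Or.inl rfl
  · have := hx d c hgt (x.symm hcd)
    omega

theorem not_peMem (hx : RelatesOnlyExcludedPairs x) (hbot : ⊥ < x) : ¬ PEmem x := by
  obtain ⟨a, b, hab, hrel⟩ := Setoid.exists_lt_rel_of_bot_lt hbot
  have hn : 2 ≤ n := by omega
  rintro ⟨-, hblock, hsingleton⟩
  by_cases hlast : ∃ c d : Fin n, c.val = n - 2 ∧ d.val = n - 1 ∧ x.r c d
  · obtain ⟨c, d, hc, hd, hcd⟩ := hlast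
    refine hblock ⟨c, Set.ext fun e => ⟨?_, fun hce => ?_⟩⟩
    · rintro (he | he)
      · exact (Fin.ext (hc.trans he.symm) : c = e) ▸ x.refl c
      · exact (Fin.ext (hd.trans he.symm) : d = e) ▸ hcd
    · have := hx.val_cases hce
      have := hx.val_cases (x.trans (x.symm hce) hcd)
      simp only [Set.mem_ofPred_eq]
      omega
  · push Not at hlast
    obtain ⟨l, hl⟩ : ∃ l : Fin n, l.val = n - 1 := ⟨⟨n - 1, by omega⟩, rfl⟩
    refine hsingleton ⟨⟨l, Set.ext fun e => ⟨fun he => ?_, fun hle => ?_⟩⟩, ?_⟩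
    · exact (Fin.ext (hl.trans he.symm) : l = e) ▸ x.refl l
    · by_contra hne
      have := hx.val_cases hle
      exact hlast e l (by simp only [Set.mem_ofPred_eq] at hne; omega) hl (x.symm hle)
    · rcases hx a b hab hrel with ⟨ha, hb⟩ | ⟨ha, hb⟩
      · exact ⟨a, b, ha, hb, hrel⟩
      · exact absurd hrel (hlast a b ha hb)

end RelatesOnlyExcludedPairs

theorem PEmem.exists_admissible_rel {x : Setoid (Fin n)} (hx : PEmem x) (hbot : ⊥ < x) :
    ∃ i j : Fin n, i < j ∧ x.r i j ∧
      ¬(i.val = 0 ∧ j.val = n - 2) ∧ ¬(i.val = n - 2 ∧ j.val = n - 1) := by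
  by_contra hnone
  refine RelatesOnlyExcludedPairs.not_peMem (fun c d hcd hrel => ?_) hbot hx
  by_contra hgood
  exact hnone ⟨c, d, hcd, hrel, fun h => hgood (Or.inl h), fun h => hgood (Or.inr h)⟩

theorem PE_atoms_general (n : ℕ) (x : Setoid (Fin n)) :
    (PEmem x ∧ ⊥ < x ∧ ∀ z, PEmem z → ⊥ < z → ¬ z < x) ↔
      (∃ i j : Fin n, i < j ∧ x = blockSetoid ({i, j} : Set (Fin n)) ∧
        ¬(i.val = 0 ∧ j.val = n - 2) ∧ ¬(i.val = n - 2 ∧ j.val = n - 1)) := by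
  constructor
  · rintro ⟨hx, hbot, hmin⟩
    obtain ⟨i, j, hij, hrel, h₁, h₂⟩ := hx.exists_admissible_rel hbot
    have hle : blockSetoid ({i, j} : Set (Fin n)) ≤ x := blockSetoid_pair_le_iff.mpr hrel
    have hnlt := hmin _ (peMem_blockSetoid_pair hij h₁ h₂) (isAtom_blockSetoid_pair hij).bot_lt
    exact ⟨i, j, hij, (hle.lt_or_eq.resolve_left hnlt).symm, h₁, h₂⟩
  · rintro ⟨i, j, hij, rfl, h₁, h₂⟩
    have hatom := isAtom_blockSetoid_pair hij
    exact ⟨peMem_blockSetoid_pair hij h₁ h₂, hatom.bot_lt,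
      fun z _ hz hlt => hz.ne' (hatom.2 z hlt)⟩

/-- The atoms of `(PE_n, ≤_dref)` (elements covering the discrete
partition, the bottom of `PE_n`) are exactly the partitions `a_{i,j}` with unique
non-singleton block `{i, j}` for `1 ≤ i < j ≤ n`, except `a_{1,n-1}` and `a_{n-1,n}`. -/
theorem PE_atoms (n : ℕ) (hn : 3 ≤ n) (x : Setoid (Fin n)) :
    (PEmem x ∧ ⊥ < x ∧ ∀ z, PEmem z → ⊥ < z → ¬ z < x) ↔
      (∃ i j : Fin n, i < j ∧ x = blockSetoid ({i, j} : Set (Fin n)) ∧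
        ¬(i.val = 0 ∧ j.val = n - 2) ∧ ¬(i.val = n - 2 ∧ j.val = n - 1)) :=
  PE_atoms_general n x
end

section
/- Let x ⋖ y in PE_n be a cover relation with parking label π(x,y) = n-1, i.e., the block B of x containing n-1 is merged with the singleton {n} to form y. Then the element y' obtained from x by merging the block A of x containing 1 with the singleton block {n} lies in PE_n, covers x, satisfies π(x,y') < n-1, and satisfies λ(x,y') = 1 < λ(x,y), where λ is the S_n EL-labeling of PE_n coming from the left-modular chain x_1 < ... < x_n. -/
/-!
Since `{n}` is a singleton block of `x`, both `y` and `y'` merge a block of `x` with `{n}`;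
merging two blocks of any partition is a cover in the partition lattice. Merging the blocks of
the first and the last element keeps a partition noncrossing: a block straddling an element of
either would cross it. The block of `y'` containing `n` also contains `1`, so `y' ∈ PE_n`, and its
parking label lies in the block of `1`, which avoids `n - 1` because `x ∈ PE_n`. Finally `x_2` has
the single block `{1, n}`, so `λ(x, z) = 1` exactly when `1 ∼ n` in `z` but not in `x`: this holds
for `y'` and fails for `y`.
-/

namespace Setoid

variable {α : Type*}

def mergeBlocks (x : Setoid α) (u v : α) : Setoid α where
  r a b := x.r a b ∨ ((x.r a u ∨ x.r a v) ∧ (x.r b u ∨ x.r b v))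
  iseqv := by
    refine ⟨fun a => Or.inl (x.refl a), ?_, ?_⟩
    · rintro a b (h | ⟨ha, hb⟩)
      · exact Or.inl (x.symm h)
      · exact Or.inr ⟨hb, ha⟩
    · rintro a b c (hab | ⟨ha, hb⟩) (hbc | ⟨hb', hc⟩)
      · exact Or.inl (x.trans hab hbc)
      · exact Or.inr ⟨hb'.imp (x.trans hab) (x.trans hab), hc⟩
      · exact Or.inr ⟨ha, hb.imp (x.trans (x.symm hbc)) (x.trans (x.symm hbc))⟩
      · exact Or.inr ⟨ha, hc⟩

variable {x w : Setoid α} {u v a b : α}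

theorem mergeBlocks_rel_iff :
    (x.mergeBlocks u v).r a b ↔ x.r a b ∨ ((x.r a u ∨ x.r a v) ∧ (x.r b u ∨ x.r b v)) :=
  Iff.rfl

theorem le_mergeBlocks : x ≤ x.mergeBlocks u v :=
  fun _ _ h => Or.inl h

theorem mergeBlocks_rel : (x.mergeBlocks u v).r u v :=
  Or.inr ⟨Or.inl (x.refl u), Or.inr (x.refl v)⟩

theorem mergeBlocks_rel_iff_of_not_rel (hu : ¬ x.r a u) (hv : ¬ x.r a v) :
    (x.mergeBlocks u v).r a b ↔ x.r a b := by
  simp [mergeBlocks_rel_iff, hu, hv]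

theorem mergeBlocks_le (hxw : x ≤ w) (huv : w.r u v) : x.mergeBlocks u v ≤ w := by
  have hw : ∀ {c}, x.r c u ∨ x.r c v → w.r c u := by
    rintro c (h | h)
    · exact hxw h
    · exact w.trans (hxw h) (w.symm huv)
  rintro a b (h | ⟨ha, hb⟩)
  · exact hxw h
  · exact w.trans (hw ha) (w.symm (hw hb))

theorem covBy_mergeBlocks (huv : ¬ x.r u v) : x ⋖ x.mergeBlocks u v := by
  refine ⟨lt_of_le_not_ge le_mergeBlocks fun h => huv (h mergeBlocks_rel), fun w hxw hwm => ?_⟩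
  obtain ⟨a, b, hw, hx⟩ : ∃ a b, w.r a b ∧ ¬ x.r a b := by
    by_contra! h
    exact hxw.not_ge fun a b => h a b
  have hwuv : w.r u v := by
    rcases hwm.le hw with h | ⟨ha | ha, hb | hb⟩
    · exact absurd h hx
    · exact absurd (x.trans ha (x.symm hb)) hx
    · exact w.trans (w.trans (hxw.le (x.symm ha)) hw) (hxw.le hb)
    · exact w.trans (w.trans (hxw.le (x.symm hb)) (w.symm hw)) (hxw.le ha)
    · exact absurd (x.trans ha (x.symm hb)) hx
  exact hwm.not_ge (mergeBlocks_le hxw.le hwuv)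

theorem eq_mergeBlocks_of_singleton {z : Setoid α} {t : α} (ht : ∀ b, x.r t b → b = t)
    (hz : ∀ a b, z.r a b ↔ x.r a b ∨ ((x.r a u ∨ a = t) ∧ (x.r b u ∨ b = t))) :
    z = x.mergeBlocks u t := by
  have hrel : ∀ a, x.r a t ↔ a = t := fun a => ⟨fun h => ht a (x.symm h), fun h => h ▸ x.refl t⟩
  ext a b
  rw [hz, mergeBlocks_rel_iff, hrel, hrel]

end Setoid

section Blocks

variable {n : ℕ} {x : Setoid (Fin n)} {B B' : Set (Fin n)} {a b : Fin n}

theorem IsBlock.eq_setOf_rel (hB : IsBlock x B) (ha : a ∈ B) : B = {b | x.r a b} := by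
  obtain ⟨c, rfl⟩ := hB
  ext b
  exact ⟨fun hb => x.trans (x.symm ha) hb, fun hb => x.trans ha hb⟩

theorem IsBlock.nonempty (hB : IsBlock x B) : B.Nonempty := by
  obtain ⟨c, rfl⟩ := hB
  exact ⟨c, x.refl c⟩

theorem IsBlock.eq_of_rel (hB : IsBlock x B) (hB' : IsBlock x B') (ha : a ∈ B) (hb : b ∈ B')
    (hab : x.r a b) : B = B' := by
  rw [hB.eq_setOf_rel ha, hB'.eq_setOf_rel hb]
  ext c
  exact ⟨fun h => x.trans (x.symm hab) h, fun h => x.trans hab h⟩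

theorem not_isBlock_of_rel (hab : x.r a b) (ha : a ∈ B) (hb : b ∉ B) : ¬ IsBlock x B :=
  fun hB => hb ((hB.eq_setOf_rel ha) ▸ hab)

end Blocks

section Noncrossing

variable {n : ℕ} {x : Setoid (Fin n)} {u v : Fin n}

theorem IsNoncrossing.rel_of_straddle (hx : IsNoncrossing x) (hu : ∀ c, u ≤ c)
    (hv : ∀ c, c ≤ v) {a b c : Fin n} (hab : a < b) (hbc : b < c) (hac : x.r a c)
    (hb : x.r b u ∨ x.r b v) : x.r a u ∨ x.r a v := by
  rcases hb with hb | hb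
  · rcases (hu a).eq_or_lt with rfl | hua
    · exact Or.inl (x.refl _)
    · exact Or.inl (x.symm (hx u a b c hua hab hbc (x.symm hb) hac))
  · rcases (hv c).eq_or_lt with rfl | hcv
    · exact Or.inr hac
    · exact Or.inr (x.trans (hx a b c v hab hbc hcv hac hb) hb)

theorem IsNoncrossing.mergeBlocks (hx : IsNoncrossing x) (hu : ∀ c, u ≤ c)
    (hv : ∀ c, c ≤ v) : IsNoncrossing (x.mergeBlocks u v) := by
  intro i j k l hij hjk hkl hik hjl
  rcases hik with hik | ⟨hi, hk⟩ <;> rcases hjl with hjl | ⟨hj, -⟩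
  · exact Or.inl (hx i j k l hij hjk hkl hik hjl)
  · exact Or.inr ⟨hx.rel_of_straddle hu hv hij hjk hik hj, hj⟩
  · exact Or.inr ⟨hi, hx.rel_of_straddle hu hv hjk hkl hjl hk⟩
  · exact Or.inr ⟨hi, hj⟩

end Noncrossing

section PE

variable {n : ℕ} {x z : Setoid (Fin n)} {u t p : Fin n}

theorem pemem_mergeBlocks (hn : 3 ≤ n) (hx : IsNoncrossing x) (hu : u.val = 0)
    (ht : t.val = n - 1) : PEmem (x.mergeBlocks u t) := by
  have hut : (x.mergeBlocks u t).r t u := (x.mergeBlocks u t).symm Setoid.mergeBlocks_rel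
  refine ⟨hx.mergeBlocks (fun c => Fin.le_def.mpr (by omega))
      (fun c => Fin.le_def.mpr (by omega)),
    not_isBlock_of_rel hut (Or.inr ht) (by simp only [Set.mem_ofPred_eq]; omega),
    fun ⟨hB, _⟩ => not_isBlock_of_rel hut ht (by simp only [Set.mem_ofPred_eq]; omega) hB⟩

theorem covPE_of_covBy (hx : PEmem x) (hz : PEmem z) (h : x ⋖ z) : CovPE x z :=
  ⟨hx, hz, h.lt, fun _ _ hlt => h.2 hlt⟩

theorem ParkingLabelIs.exists_lt (h : ParkingLabelIs x z p) : ∃ b, p < b := by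
  obtain ⟨B₁, B₂, hB₁, hB₂, hne, -, -, hp, hpB₂, -⟩ := h
  obtain ⟨b, hb⟩ := hB₂.nonempty
  refine ⟨b, (hpB₂ b hb).lt_of_ne ?_⟩
  rintro rfl
  exact hne (hB₁.eq_of_rel hB₂ hp hb (x.refl p))

theorem ParkingLabelIs.rel_of_mergeBlocks (h : ParkingLabelIs x (x.mergeBlocks u t) p) :
    x.r p u ∨ x.r p t := by
  obtain ⟨B₁, B₂, hB₁, hB₂, hne, ⟨c, hc⟩, -, hp, -, -⟩ := h
  obtain ⟨b, hb⟩ := hB₂.nonempty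
  have hcp : (x.mergeBlocks u t).r c p := by
    have : p ∈ B₁ ∪ B₂ := Or.inl hp
    rwa [hc] at this
  have hcb : (x.mergeBlocks u t).r c b := by
    have : b ∈ B₁ ∪ B₂ := Or.inr hb
    rwa [hc] at this
  by_contra! hpM
  have hpb := (Setoid.mergeBlocks_rel_iff_of_not_rel hpM.1 hpM.2).mp
    ((x.mergeBlocks u t).trans ((x.mergeBlocks u t).symm hcp) hcb)
  exact hne (hB₁.eq_of_rel hB₂ hp hb hpb)

end PE

section Labels

variable {n : ℕ} {w z : Setoid (Fin n)}

theorem blockSetoid_le_iff {S : Set (Fin n)} :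
    blockSetoid S ≤ w ↔ ∀ a ∈ S, ∀ b ∈ S, w.r a b := by
  refine ⟨fun h a ha b hb => h (Or.inr ⟨ha, hb⟩), ?_⟩
  rintro h a b (rfl | ⟨ha, hb⟩)
  · exact w.refl a
  · exact h a ha b hb

theorem xChain_one_le (w : Setoid (Fin n)) : xChain n 1 ≤ w := by
  refine blockSetoid_le_iff.mpr fun a ha b hb => ?_
  obtain rfl : a = b := Fin.ext (by simp only [Set.mem_ofPred_eq] at ha hb; omega)
  exact w.refl a

theorem xChain_two_le_iff {u t : Fin n} (hu : u.val = 0) (ht : t.val = n - 1) :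
    xChain n 2 ≤ w ↔ w.r u t := by
  have hmem : ∀ a ∈ {a : Fin n | a.val + 1 < 2 ∨ a.val = n - 1}, a = u ∨ a = t := by
    intro a ha
    simp only [Set.mem_ofPred_eq] at ha
    exact ha.imp (fun h => Fin.ext (by omega)) (fun h => Fin.ext (by omega))
  refine ⟨fun h => blockSetoid_le_iff.mp h u (Or.inl (by omega)) t (Or.inr ht), fun h => ?_⟩
  refine blockSetoid_le_iff.mpr fun a ha b hb => ?_
  rcases hmem a ha with rfl | rfl <;> rcases hmem b hb with rfl | rfl
  exacts [w.refl _, h, w.symm h, w.refl _]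

theorem labelIs_one (hn : 2 ≤ n) (hw : ¬ xChain n 2 ≤ w) (hz : xChain n 2 ≤ z) :
    LabelIs n w z 1 := by
  refine ⟨2, Nat.le_succ 1, hn, rfl, ⟨hw, hz⟩, fun j hj _ hjwz => ?_⟩
  by_contra! hj2
  obtain rfl : j = 1 := by omega
  exact hjwz.1 (xChain_one_le w)

theorem LabelIs.one_lt {v : ℕ} (h : LabelIs n w z v) (hz : ¬ xChain n 2 ≤ z) : 1 < v := by
  obtain ⟨i, hi, -, rfl, ⟨hiw, hiz⟩, -⟩ := h
  rcases (show i = 1 ∨ i = 2 ∨ 3 ≤ i by omega) with rfl | rfl | hi3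
  · exact absurd (xChain_one_le w) hiw
  · exact absurd hiz hz
  · omega

end Labels

/-- Let `x ⋖ y` in `PE_n` with parking label `π(x,y) = n-1`, i.e. `{n}` is
a singleton block of `x` and `y` is obtained by merging the block `B` of `x` containing
`n-1` with `{n}`.  Then the element `y'` obtained from `x` by merging the block `A`
containing `1` with the singleton `{n}` lies in `PE_n`, covers `x`, has parking label
`π(x,y') < n-1`, and satisfies `λ(x,y') = 1 < λ(x,y)` for the EL-labeling `λ` coming from
the left-modular chain. -/
theorem PE_removed_edge_label (n : ℕ) (hn : 3 ≤ n) (x y : Setoid (Fin n))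
    (hcov : CovPE x y)
    (hsing : IsBlock x {a : Fin n | a.val = n - 1})
    (hmerge : ∀ a b : Fin n, y.r a b ↔ (x.r a b ∨
      ((x.r a ⟨n - 2, by omega⟩ ∨ a = ⟨n - 1, by omega⟩) ∧
       (x.r b ⟨n - 2, by omega⟩ ∨ b = ⟨n - 1, by omega⟩))))
    (y' : Setoid (Fin n))
    (hy' : ∀ a b : Fin n, y'.r a b ↔ (x.r a b ∨
      ((x.r a ⟨0, by omega⟩ ∨ a = ⟨n - 1, by omega⟩) ∧
       (x.r b ⟨0, by omega⟩ ∨ b = ⟨n - 1, by omega⟩)))) :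
    PEmem y' ∧ CovPE x y' ∧
    (∀ p : Fin n, ParkingLabelIs x y' p → p.val < n - 2) ∧
    LabelIs n x y' 1 ∧ (∀ v, LabelIs n x y v → 1 < v) := by
  obtain ⟨hxPE, -, -, -⟩ := hcov
  set u : Fin n := ⟨0, by omega⟩
  set s : Fin n := ⟨n - 2, by omega⟩
  set t : Fin n := ⟨n - 1, by omega⟩
  have ht : ∀ b, x.r t b → b = t := fun b hb =>
    Fin.ext ((hsing.eq_setOf_rel (a := t) rfl ▸ hb : b ∈ {a : Fin n | a.val = n - 1}))
  have hus : ¬ x.r u s := fun h => hxPE.2.2 ⟨hsing, u, s, rfl, rfl, h⟩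
  have hut : ¬ x.r u t := fun h => Fin.ne_of_val_ne (show 0 ≠ n - 1 by omega) (ht u (x.symm h))
  obtain rfl := Setoid.eq_mergeBlocks_of_singleton ht hy'
  obtain rfl := Setoid.eq_mergeBlocks_of_singleton ht hmerge
  have hy'PE := pemem_mergeBlocks hn hxPE.1 (u := u) (t := t) rfl rfl
  have hchain2 := fun w => xChain_two_le_iff (w := w) (u := u) (t := t) rfl rfl
  refine ⟨hy'PE, covPE_of_covBy hxPE hy'PE (Setoid.covBy_mergeBlocks hut), fun p hp => ?_,
    labelIs_one (by omega) ((hchain2 x).not.mpr hut) ((hchain2 _).mpr Setoid.mergeBlocks_rel),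
    fun v hv => hv.one_lt ?_⟩
  · rcases hp.rel_of_mergeBlocks with hpu | hpt
    · have hp_ne_s : p.val ≠ n - 2 := fun h => hus (x.symm ((Fin.ext h : p = s) ▸ hpu))
      have hp_ne_t : p.val ≠ n - 1 := fun h => hut (x.symm ((Fin.ext h : p = t) ▸ hpu))
      have := p.isLt
      omega
    · obtain ⟨b, hpb⟩ := hp.exists_lt
      have hpv : p.val = n - 1 := congrArg Fin.val (ht p (x.symm hpt))
      have := b.isLt
      have := Fin.lt_def.mp hpb
      omega
  · rw [hchain2, Setoid.mergeBlocks_rel_iff_of_not_rel hus hut]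
    exact hut
end
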